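/- arXiv:1602.02445 — 5 statements merged into one kernel-verified Lean document; each statement's English description precedes it below -/
import Mathlib

section
/- Let F(Λ) be the free group on Λ and w = w_1⋯w_n a word over Λ ∪ Λ^{-1}. Suppose i < j < k and: w_i = w_j^{-1} with w_{i+1}⋯w_{j−1} trivial in F(Λ), and w_i = w_k^{-1} with w_{i+1}⋯w_{k−1} trivial in F(Λ). Then w_j = w_k and w_{j+1}⋯w_k is trivial in F(Λ). -/
/-
Since `mk [x]` determines the letter `x`, the two cancellation partners of `w i` carry the same
letter `w j = w k = (w i)⁻¹`. Splitting `w_{i+1}⋯w_{k-1}` at position `j`, the trivial factor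
`w_{i+1}⋯w_{j-1}` drops out and leaves `w_j · (w_{j+1}⋯w_{k-1}) = 1`; conjugating by `w_j`
gives `(w_{j+1}⋯w_{k-1}) · w_k = 1`.
-/

namespace FreeGroup

variable {α : Type*}

theorem mk_singleton_injective : Function.Injective fun x : α × Bool => mk [x] := by
  classical
  intro x y h
  have := congrArg toWord h
  simp only [toWord_mk, reduce_singleton] at this
  exact List.singleton_injective this

theorem mk_map_range'_add (w : ℕ → α × Bool) (s m n : ℕ) :
    mk ((List.range' s (m + n)).map w) =
      mk ((List.range' s m).map w) * mk ((List.range' (s + m) n).map w) := by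
  rw [mul_mk, ← List.map_append, List.range'_append_1]

end FreeGroup

/-- If the letter at position `i` can cancel both with position `j` and with position
`k` (i.e. `w i = (w j)⁻¹` with `w_{i+1}⋯w_{j-1}` trivial, and `w i = (w k)⁻¹` with
`w_{i+1}⋯w_{k-1}` trivial, where `i < j < k`), then `w j = w k` and `w_{j+1}⋯w_k`
is trivial in the free group. -/
theorem stmt7 (Λ : Type*) (w : ℕ → Λ × Bool) (i j k : ℕ) (hij : i < j) (hjk : j < k)
    (h1 : FreeGroup.mk [w i] = (FreeGroup.mk [w j])⁻¹)
    (h2 : FreeGroup.mk ((List.range' (i + 1) (j - i - 1)).map w) = 1)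
    (h3 : FreeGroup.mk [w i] = (FreeGroup.mk [w k])⁻¹)
    (h4 : FreeGroup.mk ((List.range' (i + 1) (k - i - 1)).map w) = 1) :
    w j = w k ∧ FreeGroup.mk ((List.range' (j + 1) (k - j)).map w) = 1 := by
  have hwjk : w j = w k := FreeGroup.mk_singleton_injective (inv_injective (h1.symm.trans h3))
  refine ⟨hwjk, ?_⟩
  have hcancel :
      FreeGroup.mk [w j] * FreeGroup.mk ((List.range' (j + 1) (k - j - 1)).map w) = 1 := by
    rwa [show k - i - 1 = j - i - 1 + 1 + (k - j - 1) by omega, FreeGroup.mk_map_range'_add,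
      FreeGroup.mk_map_range'_add, h2, one_mul, show i + 1 + (j - i - 1) = j by omega,
      show i + 1 + (j - i - 1 + 1) = j + 1 by omega,
      List.range'_one, List.map_singleton] at h4
  rw [show k - j = k - j - 1 + 1 by omega, FreeGroup.mk_map_range'_add,
    show j + 1 + (k - j - 1) = k by omega, List.range'_one, List.map_singleton, ← hwjk]
  exact mul_eq_one_comm.mp hcancel
end

section
/- Let α_1,…,α_n, β_1,…,β_n be nonzero rationals and k_0,…,k_n rationals, with k_{i,j} = Σ_{ν=i}^{j} k_ν · ∏_{μ=i+1}^{ν} (α_μ/β_μ). Suppose λ_1 < λ_2 < λ_3 < λ_4 satisfy ∏_{μ=λ_1+1}^{λ_2} (α_μ/β_μ) = 1. Then k_{λ_1, λ_4−1} = k_{λ_1, λ_3−1} + k_{λ_2, λ_4−1} − k_{λ_2, λ_3−1}. -/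
/-- Case 1 identity: if `∏_{μ=λ1+1}^{λ2} (α μ/β μ) = 1` for `λ1 < λ2 < λ3 < λ4 ≤ n`, then
`K λ1 (λ4-1) = K λ1 (λ3-1) + K λ2 (λ4-1) - K λ2 (λ3-1)`, where
`K i j = Σ_{ν=i}^{j} k ν · ∏_{μ=i+1}^{ν} (α μ/β μ)`. -/
theorem stmt10 (n : ℕ) (α β k : ℕ → ℚ)
    (hα : ∀ μ, 1 ≤ μ → μ ≤ n → α μ ≠ 0) (hβ : ∀ μ, 1 ≤ μ → μ ≤ n → β μ ≠ 0)
    (K : ℕ → ℕ → ℚ)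
    (hK : ∀ i j, K i j = ∑ ν ∈ Finset.Icc i j, k ν * ∏ μ ∈ Finset.Icc (i + 1) ν, α μ / β μ)
    (l1 l2 l3 l4 : ℕ) (h12 : l1 < l2) (h23 : l2 < l3) (h34 : l3 < l4) (h4n : l4 ≤ n)
    (hprod : ∏ μ ∈ Finset.Icc (l1 + 1) l2, α μ / β μ = 1) :
    K l1 (l4 - 1) = K l1 (l3 - 1) + K l2 (l4 - 1) - K l2 (l3 - 1) := by
  have key : ∀ j, l2 ≤ j →
      K l1 j = (∑ ν ∈ Finset.Ico l1 l2, k ν * ∏ μ ∈ Finset.Icc (l1 + 1) ν, α μ / β μ)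
        + K l2 j := by
    intro j hj
    rw [hK, hK]
    have hset : Finset.Icc l1 j = Finset.Ico l1 l2 ∪ Finset.Icc l2 j := by
      ext x
      simp only [Finset.mem_Icc, Finset.mem_Ico, Finset.mem_union]
      omega
    have hdisj : Disjoint (Finset.Ico l1 l2) (Finset.Icc l2 j) := by
      rw [Finset.disjoint_left]
      intro x hx hx'
      simp only [Finset.mem_Icc, Finset.mem_Ico] at hx hx'
      omega
    rw [hset, Finset.sum_union hdisj]
    congr 1
    refine Finset.sum_congr rfl fun ν hν => ?_
    have hν' : l2 ≤ ν := (Finset.mem_Icc.mp hν).1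
    congr 1
    rw [Finset.Icc_add_one_left_eq_Ioc] at hprod
    rw [Finset.Icc_add_one_left_eq_Ioc, Finset.Icc_add_one_left_eq_Ioc,
      ← Finset.prod_Ioc_consecutive (fun μ => α μ / β μ) h12.le hν', hprod, one_mul]
  rw [key _ (by omega), key _ (by omega)]
  ring
end

section
/- Let α_1,…,α_n, β_1,…,β_n be nonzero rationals, k_0,…,k_n rationals, and k_{i,j} = Σ_{ν=i}^{j} k_ν · ∏_{μ=i+1}^{ν} (α_μ/β_μ). Suppose λ_1 < λ_2 < λ_3 < λ_4 satisfy ∏_{μ=λ_1+1}^{λ_2−1} (α_μ/β_μ) = 1 and ∏_{μ=λ_1+1}^{λ_3} (α_μ/β_μ) = 1. Then k_{λ_1, λ_4−1} = k_{λ_1, λ_2−1} + (α_{λ_2}/β_{λ_2})·k_{λ_2, λ_3−1} + k_{λ_3, λ_4−1}. -/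
lemma split_prod' (f : ℕ → ℚ) (a m c : ℕ) (hm : 1 ≤ m) (h1 : a ≤ m) (h2 : m ≤ c + 1) :
    ∏ μ ∈ Finset.Icc a c, f μ
      = (∏ μ ∈ Finset.Icc a (m - 1), f μ) * ∏ μ ∈ Finset.Icc m c, f μ := by
  rw [← Finset.prod_union]
  · congr 1; ext x; simp only [Finset.mem_union, Finset.mem_Icc]; omega
  · simp only [Finset.disjoint_left, Finset.mem_Icc]; omega

lemma split_sum' (f : ℕ → ℚ) (a m c : ℕ) (hm : 1 ≤ m) (h1 : a ≤ m) (h2 : m ≤ c + 1) :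
    ∑ μ ∈ Finset.Icc a c, f μ
      = (∑ μ ∈ Finset.Icc a (m - 1), f μ) + ∑ μ ∈ Finset.Icc m c, f μ := by
  rw [← Finset.sum_union]
  · congr 1; ext x; simp only [Finset.mem_union, Finset.mem_Icc]; omega
  · simp only [Finset.disjoint_left, Finset.mem_Icc]; omega

/-- Case 2 identity: if `∏_{μ=λ1+1}^{λ2-1} (α μ/β μ) = 1` and
`∏_{μ=λ1+1}^{λ3} (α μ/β μ) = 1` for `λ1 < λ2 < λ3 < λ4 ≤ n`, then
`K λ1 (λ4-1) = K λ1 (λ2-1) + (α λ2/β λ2)·K λ2 (λ3-1) + K λ3 (λ4-1)`, where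
`K i j = Σ_{ν=i}^{j} k ν · ∏_{μ=i+1}^{ν} (α μ/β μ)`. -/
theorem stmt11 (n : ℕ) (α β k : ℕ → ℚ)
    (hα : ∀ μ, 1 ≤ μ → μ ≤ n → α μ ≠ 0) (hβ : ∀ μ, 1 ≤ μ → μ ≤ n → β μ ≠ 0)
    (K : ℕ → ℕ → ℚ)
    (hK : ∀ i j, K i j = ∑ ν ∈ Finset.Icc i j, k ν * ∏ μ ∈ Finset.Icc (i + 1) ν, α μ / β μ)
    (l1 l2 l3 l4 : ℕ) (h12 : l1 < l2) (h23 : l2 < l3) (h34 : l3 < l4) (h4n : l4 ≤ n)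
    (hprod1 : ∏ μ ∈ Finset.Icc (l1 + 1) (l2 - 1), α μ / β μ = 1)
    (hprod2 : ∏ μ ∈ Finset.Icc (l1 + 1) l3, α μ / β μ = 1) :
    K l1 (l4 - 1) = K l1 (l2 - 1) + (α l2 / β l2) * K l2 (l3 - 1) + K l3 (l4 - 1) := by
  simp only [hK]
  rw [split_sum' _ l1 l2 (l4 - 1) (by omega) (by omega) (by omega),
      split_sum' _ l2 l3 (l4 - 1) (by omega) (by omega) (by omega)]
  have e2 : ∀ ν ∈ Finset.Icc l2 (l3 - 1),
      k ν * ∏ μ ∈ Finset.Icc (l1 + 1) ν, α μ / β μ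
        = (α l2 / β l2) * (k ν * ∏ μ ∈ Finset.Icc (l2 + 1) ν, α μ / β μ) := by
    intro ν hν
    simp only [Finset.mem_Icc] at hν
    rw [split_prod' _ (l1 + 1) l2 ν (by omega) (by omega) (by omega), hprod1, one_mul,
        split_prod' _ l2 (l2 + 1) ν (by omega) (by omega) (by omega)]
    simp only [Nat.add_sub_cancel, Finset.Icc_self, Finset.prod_singleton]
    ring
  have e3 : ∀ ν ∈ Finset.Icc l3 (l4 - 1),
      k ν * ∏ μ ∈ Finset.Icc (l1 + 1) ν, α μ / β μ
        = k ν * ∏ μ ∈ Finset.Icc (l3 + 1) ν, α μ / β μ := by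
    intro ν hν
    simp only [Finset.mem_Icc] at hν
    rw [split_prod' _ (l1 + 1) (l3 + 1) ν (by omega) (by omega) (by omega)]
    simp only [Nat.add_sub_cancel, hprod2, one_mul]
  rw [Finset.sum_congr rfl e2, Finset.sum_congr rfl e3, ← Finset.mul_sum]
  ring
end

section
/- Let α_1,…,α_n, β_1,…,β_n be nonzero rationals, k_0,…,k_n rationals, and k_{i,j} = Σ_{ν=i}^{j} k_ν · ∏_{μ=i+1}^{ν} (α_μ/β_μ). Suppose λ_1 < λ_2 < λ_3 < λ_4 satisfy ∏_{μ=λ_1+1}^{λ_2−1} (α_μ/β_μ) = 1 and ∏_{μ=λ_2+1}^{λ_3} (α_μ/β_μ) = 1. Then k_{λ_1, λ_3−1} − k_{λ_1, λ_2−1} = (α_{λ_2}/β_{λ_2}) · (k_{λ_2, λ_4−1} − k_{λ_3, λ_4−1}). -/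
/-- Case 3 identity: if `∏_{μ=λ1+1}^{λ2-1} (α μ/β μ) = 1` and
`∏_{μ=λ2+1}^{λ3} (α μ/β μ) = 1` for `λ1 < λ2 < λ3 < λ4 ≤ n`, then
`K λ1 (λ3-1) - K λ1 (λ2-1) = (α λ2/β λ2)·(K λ2 (λ4-1) - K λ3 (λ4-1))`, where
`K i j = Σ_{ν=i}^{j} k ν · ∏_{μ=i+1}^{ν} (α μ/β μ)`. -/
theorem stmt12 (n : ℕ) (α β k : ℕ → ℚ)
    (hα : ∀ μ, 1 ≤ μ → μ ≤ n → α μ ≠ 0) (hβ : ∀ μ, 1 ≤ μ → μ ≤ n → β μ ≠ 0)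
    (K : ℕ → ℕ → ℚ)
    (hK : ∀ i j, K i j = ∑ ν ∈ Finset.Icc i j, k ν * ∏ μ ∈ Finset.Icc (i + 1) ν, α μ / β μ)
    (l1 l2 l3 l4 : ℕ) (h12 : l1 < l2) (h23 : l2 < l3) (h34 : l3 < l4) (h4n : l4 ≤ n)
    (hprod1 : ∏ μ ∈ Finset.Icc (l1 + 1) (l2 - 1), α μ / β μ = 1)
    (hprod2 : ∏ μ ∈ Finset.Icc (l2 + 1) l3, α μ / β μ = 1) :
    K l1 (l3 - 1) - K l1 (l2 - 1)
      = (α l2 / β l2) * (K l2 (l4 - 1) - K l3 (l4 - 1)) := by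
  have hIoc : ∀ a b : ℕ, Finset.Icc (a + 1) b = Finset.Ioc a b := by
    intro a b; exact Finset.Icc_add_one_left_eq_Ioc a b
  simp only [hK, hIoc] at hprod1 hprod2 ⊢
  have hdisj : ∀ a b c : ℕ, Disjoint (Finset.Icc a b) (Finset.Ioc b c) := by
    intro a b c
    refine Finset.disjoint_left.2 ?_
    intro x hx hx'
    simp only [Finset.mem_Icc, Finset.mem_Ioc] at hx hx'
    omega
  -- split LHS sum
  have e1 : Finset.Icc l1 (l3 - 1)
      = Finset.Icc l1 (l2 - 1) ∪ Finset.Ioc (l2 - 1) (l3 - 1) := by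
    ext x; simp only [Finset.mem_Icc, Finset.mem_union, Finset.mem_Ioc]; omega
  rw [e1, Finset.sum_union (hdisj _ _ _), add_sub_cancel_left]
  -- split RHS first sum
  have e2 : Finset.Icc l2 (l4 - 1)
      = Finset.Icc l2 (l3 - 1) ∪ Finset.Ioc (l3 - 1) (l4 - 1) := by
    ext x; simp only [Finset.mem_Icc, Finset.mem_union, Finset.mem_Ioc]; omega
  rw [e2, Finset.sum_union (hdisj _ _ _)]
  have e3 : Finset.Ioc (l3 - 1) (l4 - 1) = Finset.Icc l3 (l4 - 1) := by
    rw [← hIoc]; congr 1; omega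
  rw [e3]
  have e4 : ∀ ν ∈ Finset.Icc l3 (l4 - 1),
      k ν * ∏ μ ∈ Finset.Ioc l2 ν, α μ / β μ
        = k ν * ∏ μ ∈ Finset.Ioc l3 ν, α μ / β μ := by
    intro ν hν
    simp only [Finset.mem_Icc] at hν
    rw [← Finset.prod_Ioc_consecutive (fun μ => α μ / β μ) (le_of_lt h23) hν.1,
      hprod2, one_mul]
  rw [Finset.sum_congr rfl e4, add_sub_cancel_right, Finset.mul_sum]
  have e5 : Finset.Ioc (l2 - 1) (l3 - 1) = Finset.Icc l2 (l3 - 1) := by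
    rw [← hIoc]; congr 1; omega
  rw [e5]
  refine Finset.sum_congr rfl ?_
  intro ν hν
  simp only [Finset.mem_Icc] at hν
  rw [← Finset.prod_Ioc_consecutive (fun μ => α μ / β μ) (by omega : l1 ≤ l2) hν.1,
    ← Finset.prod_Ioc_consecutive (fun μ => α μ / β μ) (by omega : l1 ≤ l2 - 1)
      (by omega : l2 - 1 ≤ l2), hprod1, one_mul]
  have : Finset.Ioc (l2 - 1) l2 = {l2} := by
    rw [← hIoc]; rw [show l2 - 1 + 1 = l2 by omega, Finset.Icc_self]
  rw [this, Finset.prod_singleton]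
  ring
end

section
/- Let R be a symmetric relation on a finite set X with x not related to itself for any x, and suppose R satisfies: whenever i R ℓ, ℓ R m, and m R j, also i R j. Define i ≈ j iff i = j or there exists ℓ with i R ℓ and ℓ R j. Then ≈ is an equivalence relation, and the map sending the class [i] to [j] whenever i R j is a well-defined fixed-point-free partial involution on the set of ≈-classes. -/
/-- Let `R` be a symmetric, irreflexive relation on a finite set `X` satisfying the
three-step transitivity condition. Then `i ≈ j ↔ i = j ∨ ∃ ℓ, R i ℓ ∧ R ℓ j` is an
equivalence relation, the assignment `[i] ↦ [j]` for `R i j` is well defined on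
`≈`-classes, and it is fixed-point free. -/
theorem stmt14 (X : Type*) [Fintype X] (R : X → X → Prop)
    (hsymm : ∀ i j, R i j → R j i) (hirr : ∀ i, ¬ R i i)
    (htrans3 : ∀ i l m j, R i l → R l m → R m j → R i j) :
    Equivalence (fun i j : X => i = j ∨ ∃ l, R i l ∧ R l j) ∧
    (∀ i j i' j', R i j → R i' j' →
      (i = i' ∨ ∃ l, R i l ∧ R l i') → (j = j' ∨ ∃ l, R j l ∧ R l j')) ∧
    (∀ i j, R i j → ¬ (i = j ∨ ∃ l, R i l ∧ R l j)) := by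
  refine ⟨⟨fun i => Or.inl rfl, ?_, ?_⟩, ?_, ?_⟩
  · rintro i j (rfl | ⟨l, h1, h2⟩)
    · exact Or.inl rfl
    · exact Or.inr ⟨l, hsymm _ _ h2, hsymm _ _ h1⟩
  · rintro i j k (rfl | ⟨l, h1, h2⟩) (rfl | ⟨m, h3, h4⟩)
    · exact Or.inl rfl
    · exact Or.inr ⟨m, h3, h4⟩
    · exact Or.inr ⟨l, h1, h2⟩
    · exact Or.inr ⟨m, htrans3 _ _ _ _ h1 h2 h3, h4⟩
  · rintro i j i' j' hij hij' (rfl | ⟨l, h1, h2⟩)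
    · exact Or.inr ⟨i, hsymm _ _ hij, hij'⟩
    · exact Or.inr ⟨i', htrans3 _ _ _ _ (hsymm _ _ hij) h1 h2, hij'⟩
  · rintro i j hij (rfl | ⟨l, h1, h2⟩)
    · exact hirr _ hij
    · exact hirr i (htrans3 _ _ _ _ h1 h2 (hsymm _ _ hij))
end
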